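/- For every set X ⊆ ℕ, L(U_{X,2}) = L_X, where U_{X,2} = {Y ⊆ ℕ : Y ∩ X has at least two elements}, L_X = {Y ⊆ ℕ : Y ∩ X is infinite}, and L(A) = {Z ⊆ ℕ : for every finite cover Z₀,…,Z_k of Z there is some i with Z_i ∈ A}. -/

import Mathlib

/-- `LargestPR A` is the largest partition regular subclass of `A` (when nonempty):
the sets all of whose finite covers have a part in `A`. -/
def LargestPR (A : Set (Set ℕ)) : Set (Set ℕ) :=
  {Z : Set ℕ | ∀ (k : ℕ) (Y : Fin (k + 1) → Set ℕ), Z ⊆ ⋃ i, Y i → ∃ i, Y i ∈ A}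

/-!
If `Z ∩ X` is finite, `Z` is covered by `Xᶜ` and the singletons of `Z ∩ X`, none of which meets
`X` twice. If `Z ∩ X` is infinite, some part of any finite cover of `Z` meets `X` infinitely often,
hence at least twice.
-/

open Set

theorem largestPR_mono {A B : Set (Set ℕ)} (h : A ⊆ B) : LargestPR A ⊆ LargestPR B :=
  fun _ hZ k Y hcov => (hZ k Y hcov).imp fun _ hi => h hi

theorem subset_largestPR_setOf_infinite_inter (X : Set ℕ) :
    {Y : Set ℕ | (Y ∩ X).Infinite} ⊆ LargestPR {Y | (Y ∩ X).Infinite} := by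
  intro Z hZ k Y hcov
  by_contra! hfin
  simp only [mem_ofPred_eq, not_infinite] at hfin
  refine hZ ((finite_iUnion hfin).subset ?_)
  rw [← iUnion_inter]
  exact inter_subset_inter_left X hcov

theorem exists_mem_of_mem_largestPR {A : Set (Set ℕ)} {Z : Set ℕ} (hZ : Z ∈ LargestPR A)
    {ι : Type*} [Finite ι] (W₀ : Set ℕ) (W : ι → Set ℕ) (hcov : Z ⊆ W₀ ∪ ⋃ i, W i) :
    W₀ ∈ A ∨ ∃ i, W i ∈ A := by
  obtain ⟨n, ⟨e⟩⟩ := Finite.exists_equiv_fin ι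
  have hcov' : Z ⊆ ⋃ j, (Fin.cons W₀ (W ∘ e.symm) : Fin (n + 1) → Set ℕ) j := by
    intro z hz
    rcases hcov hz with hz₀ | hzW
    · exact mem_iUnion.2 ⟨0, hz₀⟩
    · obtain ⟨i, hi⟩ := mem_iUnion.1 hzW
      exact mem_iUnion.2 ⟨(e i).succ, by simpa using hi⟩
  obtain ⟨j, hj⟩ := hZ n _ hcov'
  induction j using Fin.cases with
  | zero => exact Or.inl hj
  | succ j => exact Or.inr ⟨e.symm j, hj⟩

theorem notMem_largestPR_setOf_nontrivial_inter {X Z : Set ℕ} (hfin : (Z ∩ X).Finite) :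
    Z ∉ LargestPR {Y | (Y ∩ X).Nontrivial} := by
  intro hZ
  have : Finite ↥(Z ∩ X) := hfin.to_subtype
  have hcov : Z ⊆ Xᶜ ∪ ⋃ s : ↥(Z ∩ X), {(s : ℕ)} := by
    intro z hz
    by_cases hzX : z ∈ X
    · exact Or.inr (mem_iUnion.2 ⟨⟨z, hz, hzX⟩, rfl⟩)
    · exact Or.inl hzX
  rcases exists_mem_of_mem_largestPR hZ _ _ hcov with hcompl | ⟨s, hs⟩
  · exact hcompl.ne_empty (compl_inter_self X)
  · exact hs.not_subsingleton (subsingleton_singleton.anti inter_subset_left)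

/-- For every `X ⊆ ℕ`, the largest partition regular subclass of
`U_{X,2} = {Y : Y ∩ X has at least two elements}` is `L_X = {Y : Y ∩ X is infinite}`. -/
theorem largestPR_UX2_eq_LX (X : Set ℕ) :
    LargestPR {Y : Set ℕ | ∃ a ∈ Y ∩ X, ∃ b ∈ Y ∩ X, a ≠ b} =
      {Y : Set ℕ | (Y ∩ X).Infinite} := by
  change LargestPR {Y | (Y ∩ X).Nontrivial} = _
  refine Subset.antisymm (fun Z hZ hfin => notMem_largestPR_setOf_nontrivial_inter hfin hZ) ?_
  exact (subset_largestPR_setOf_infinite_inter X).trans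
    (largestPR_mono fun _ hY => Infinite.nontrivial hY)
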